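/- arXiv:0903.4359 — 3 statements merged into one kernel-verified Lean document; each statement's English description precedes it below -/
import Mathlib

section
/- An element ε̃ ∈ Λ²L* with constant coefficients t₃₂, t₁₁, t₂₁, t₁₂, t₂₂, t₁₄ satisfies the generalized Maurer–Cartan equation d_L ε̃ + (1/2)[ε̃, ε̃] = 0 if and only if t₁₂ = 0; hence the solution space is the 5-dimensional space {t₃₂ T̄*∧W̄* - t₁₁ T̄*∧ω* - t₂₁ T̄*∧ρ* - t₂₂ W̄*∧ρ* + t₁₄ ω*∧ρ*}. -/
open Complex

/-! The generalized Maurer–Cartan equation `d_L ε̃ + (1/2)[ε̃, ε̃] = 0` for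
`ε̃ = t₃₂ T̄*∧W̄* - t₁₁ T̄*∧ω* - t₂₁ T̄*∧ρ* - t₁₂ W̄*∧ω* - t₂₂ W̄*∧ρ* + t₁₄ ω*∧ρ* ∈ Λ²L*`
on the Kodaira-surface Lie algebroid `L = span{T̄, W̄, ω, ρ}` (coordinates in that basis),
with constant-coefficient Courant bracket `[X₀,X₁] = (i/2)(α₁u₄ - u₁α₄) ω` on `L`, the
Cartan-formula differential (anchor terms vanishing for constant coefficients), and the
Schouten bracket induced by the Courant bracket on `(g ⊕ g*) ⊗ ℂ` under the
identifications `T̄* ≡ 2ω̄`, `W̄* ≡ 2ρ̄`, `ω* ≡ 2T`, `ρ* ≡ 2W`; trivectors are regarded as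
trilinear forms on `L` via the pairing `φ v x = 2⟨v, x⟩`. -/

abbrev V8 := (Fin 4 → ℂ) × (Fin 4 → ℂ)

noncomputable def gbr (A B : Fin 4 → ℂ) : Fin 4 → ℂ :=
  fun i => if i = 1 ∨ i = 3 then (I/2) * (A 0 * B 2 - A 2 * B 0) else 0

noncomputable def ceLD (A σ : Fin 4 → ℂ) : Fin 4 → ℂ :=
  fun j => -(∑ i, σ i * gbr A (Pi.single j 1) i)

noncomputable def courant (p q : V8) : V8 :=
  (gbr p.1 q.1, ceLD p.1 q.2 - ceLD q.1 p.2)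

/-- `φ v x = 2⟨v, x⟩` for `v ∈ (g ⊕ g*) ⊗ ℂ` and `x ∈ L` (coordinates in `(T̄,W̄,ω,ρ)`). -/
noncomputable def phi8 (v : V8) (x : Fin 4 → ℂ) : ℂ :=
  v.2 2 * x 0 + v.2 3 * x 1 + v.1 0 * x 2 + v.1 1 * x 3

/-- The trivector `a∧b∧c` as a trilinear form on `L`. -/
noncomputable def triF (a b c : V8) (x y z : Fin 4 → ℂ) : ℂ :=
  Matrix.det !![phi8 a x, phi8 a y, phi8 a z;
                phi8 b x, phi8 b y, phi8 b z;
                phi8 c x, phi8 c y, phi8 c z]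

/-- Schouten bracket `[a∧b, c∧d]` as a trilinear form on `L`. -/
noncomputable def schT (a b c d : V8) (x y z : Fin 4 → ℂ) : ℂ :=
  triF (courant a c) b d x y z - triF (courant a d) b c x y z
    - triF (courant b c) a d x y z + triF (courant b d) a c x y z

noncomputable def Te : V8 := (Pi.single 0 1, 0)
noncomputable def We : V8 := (Pi.single 1 1, 0)
noncomputable def ombe : V8 := (0, Pi.single 2 1)
noncomputable def rhbe : V8 := (0, Pi.single 3 1)
noncomputable def Tbst : V8 := (2 : ℂ) • ombe
noncomputable def Wbst : V8 := (2 : ℂ) • rhbe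
noncomputable def omst : V8 := (2 : ℂ) • Te
noncomputable def rhst : V8 := (2 : ℂ) • We

noncomputable def terms (t32 t11 t21 t12 t22 t14 : ℂ) : Fin 6 → ℂ × V8 × V8 :=
  ![(t32, Tbst, Wbst), (-t11, Tbst, omst), (-t21, Tbst, rhst),
    (-t12, Wbst, omst), (-t22, Wbst, rhst), (t14, omst, rhst)]

noncomputable def cL (x y : Fin 4 → ℂ) : Fin 4 → ℂ :=
  fun j => if j = 2 then (I/2) * (y 0 * x 3 - x 0 * y 3) else 0

noncomputable def et (t32 t11 t21 t12 t22 t14 : ℂ) (x y : Fin 4 → ℂ) : ℂ :=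
  (1/2) * (t32 * (x 0 * y 1 - x 1 * y 0) - t11 * (x 0 * y 2 - x 2 * y 0)
    - t21 * (x 0 * y 3 - x 3 * y 0) - t12 * (x 1 * y 2 - x 2 * y 1)
    - t22 * (x 1 * y 3 - x 3 * y 1) + t14 * (x 2 * y 3 - x 3 * y 2))

noncomputable def dL3 (t32 t11 t21 t12 t22 t14 : ℂ) (x y z : Fin 4 → ℂ) : ℂ :=
  -et t32 t11 t21 t12 t22 t14 (cL x y) z + et t32 t11 t21 t12 t22 t14 (cL x z) y
    - et t32 t11 t21 t12 t22 t14 (cL y z) x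

lemma ceLD_apply (A σ : Fin 4 → ℂ) (j : Fin 4) :
    ceLD A σ j = -((σ 1 + σ 3) * ((I/2) * (A 0 * (if (2:Fin 4) = j then 1 else 0)
      - A 2 * (if (0:Fin 4) = j then 1 else 0)))) := by
  simp [ceLD, gbr, Fin.sum_univ_four, Pi.single_apply]
  ring

lemma courant_eval (p q : V8) (hp2 : p.1 2 = 0) (hq2 : q.1 2 = 0) :
    courant p q = (0, fun j => if (2:Fin 4) = j then
      -(I/2) * ((q.2 1 + q.2 3) * p.1 0 - (p.2 1 + p.2 3) * q.1 0) else 0) := by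
  unfold courant
  refine Prod.ext ?_ ?_
  · funext i
    simp [gbr, hp2, hq2]
  · funext j
    simp only [Pi.sub_apply, ceLD_apply, hp2, hq2]
    split <;> ring

noncomputable def sv (c : ℂ) : V8 := (0, fun j => if (2:Fin 4) = j then c else 0)

lemma courant_basis (X Y : V8) (hX : X = Tbst ∨ X = Wbst ∨ X = omst ∨ X = rhst)
    (hY : Y = Tbst ∨ Y = Wbst ∨ Y = omst ∨ Y = rhst) :
    courant X Y = sv (-(I/2) * ((Y.2 1 + Y.2 3) * X.1 0 - (X.2 1 + X.2 3) * Y.1 0)) := by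
  have h : ∀ Z : V8, Z = Tbst ∨ Z = Wbst ∨ Z = omst ∨ Z = rhst → Z.1 2 = 0 := by
    rintro Z (rfl|rfl|rfl|rfl) <;>
      simp [Tbst, Wbst, omst, rhst, Te, We, ombe, rhbe, Pi.single_apply]
  rw [courant_eval X Y (h X hX) (h Y hY)]; rfl

lemma triF_sv (c : ℂ) (b d : V8) (x y z : Fin 4 → ℂ) :
    triF (sv c) b d x y z
      = c * (x 0 * (phi8 b y * phi8 d z - phi8 b z * phi8 d y)
           - y 0 * (phi8 b x * phi8 d z - phi8 b z * phi8 d x)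
           + z 0 * (phi8 b x * phi8 d y - phi8 b y * phi8 d x)) := by
  simp [triF, sv, phi8, Matrix.det_fin_three]
  ring

lemma phi8_Tbst (x : Fin 4 → ℂ) : phi8 Tbst x = 2 * x 0 := by
  simp [phi8, Tbst, ombe, Pi.single_apply]
lemma phi8_Wbst (x : Fin 4 → ℂ) : phi8 Wbst x = 2 * x 1 := by
  simp [phi8, Wbst, rhbe, Pi.single_apply]
lemma phi8_omst (x : Fin 4 → ℂ) : phi8 omst x = 2 * x 2 := by
  simp [phi8, omst, Te, Pi.single_apply]
lemma phi8_rhst (x : Fin 4 → ℂ) : phi8 rhst x = 2 * x 3 := by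
  simp [phi8, rhst, We, Pi.single_apply]

lemma cr_Tb_Tb : courant Tbst Tbst = sv 0 := by
  rw [courant_basis _ _ (by tauto) (by tauto)]
  congr 1
  simp [Tbst, Wbst, omst, rhst, Te, We, ombe, rhbe, Pi.single_apply]
  try norm_num
  try ring

lemma cr_Tb_Wb : courant Tbst Wbst = sv 0 := by
  rw [courant_basis _ _ (by tauto) (by tauto)]
  congr 1
  simp [Tbst, Wbst, omst, rhst, Te, We, ombe, rhbe, Pi.single_apply]
  try norm_num
  try ring

lemma cr_Tb_om : courant Tbst omst = sv 0 := by
  rw [courant_basis _ _ (by tauto) (by tauto)]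
  congr 1
  simp [Tbst, Wbst, omst, rhst, Te, We, ombe, rhbe, Pi.single_apply]
  try norm_num
  try ring

lemma cr_Tb_rh : courant Tbst rhst = sv 0 := by
  rw [courant_basis _ _ (by tauto) (by tauto)]
  congr 1
  simp [Tbst, Wbst, omst, rhst, Te, We, ombe, rhbe, Pi.single_apply]
  try norm_num
  try ring

lemma cr_Wb_Tb : courant Wbst Tbst = sv 0 := by
  rw [courant_basis _ _ (by tauto) (by tauto)]
  congr 1
  simp [Tbst, Wbst, omst, rhst, Te, We, ombe, rhbe, Pi.single_apply]
  try norm_num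
  try ring

lemma cr_Wb_Wb : courant Wbst Wbst = sv 0 := by
  rw [courant_basis _ _ (by tauto) (by tauto)]
  congr 1
  simp [Tbst, Wbst, omst, rhst, Te, We, ombe, rhbe, Pi.single_apply]
  try norm_num
  try ring

lemma cr_Wb_om : courant Wbst omst = sv (2*I) := by
  rw [courant_basis _ _ (by tauto) (by tauto)]
  congr 1
  simp [Tbst, Wbst, omst, rhst, Te, We, ombe, rhbe, Pi.single_apply]
  try norm_num
  try ring

lemma cr_Wb_rh : courant Wbst rhst = sv 0 := by
  rw [courant_basis _ _ (by tauto) (by tauto)]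
  congr 1
  simp [Tbst, Wbst, omst, rhst, Te, We, ombe, rhbe, Pi.single_apply]
  try norm_num
  try ring

lemma cr_om_Tb : courant omst Tbst = sv 0 := by
  rw [courant_basis _ _ (by tauto) (by tauto)]
  congr 1
  simp [Tbst, Wbst, omst, rhst, Te, We, ombe, rhbe, Pi.single_apply]
  try norm_num
  try ring

lemma cr_om_Wb : courant omst Wbst = sv (-2*I) := by
  rw [courant_basis _ _ (by tauto) (by tauto)]
  congr 1
  simp [Tbst, Wbst, omst, rhst, Te, We, ombe, rhbe, Pi.single_apply]
  try norm_num
  try ring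

lemma cr_om_om : courant omst omst = sv 0 := by
  rw [courant_basis _ _ (by tauto) (by tauto)]
  congr 1
  simp [Tbst, Wbst, omst, rhst, Te, We, ombe, rhbe, Pi.single_apply]
  try norm_num
  try ring

lemma cr_om_rh : courant omst rhst = sv 0 := by
  rw [courant_basis _ _ (by tauto) (by tauto)]
  congr 1
  simp [Tbst, Wbst, omst, rhst, Te, We, ombe, rhbe, Pi.single_apply]
  try norm_num
  try ring

lemma cr_rh_Tb : courant rhst Tbst = sv 0 := by
  rw [courant_basis _ _ (by tauto) (by tauto)]
  congr 1
  simp [Tbst, Wbst, omst, rhst, Te, We, ombe, rhbe, Pi.single_apply]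
  try norm_num
  try ring

lemma cr_rh_Wb : courant rhst Wbst = sv 0 := by
  rw [courant_basis _ _ (by tauto) (by tauto)]
  congr 1
  simp [Tbst, Wbst, omst, rhst, Te, We, ombe, rhbe, Pi.single_apply]
  try norm_num
  try ring

lemma cr_rh_om : courant rhst omst = sv 0 := by
  rw [courant_basis _ _ (by tauto) (by tauto)]
  congr 1
  simp [Tbst, Wbst, omst, rhst, Te, We, ombe, rhbe, Pi.single_apply]
  try norm_num
  try ring

lemma cr_rh_rh : courant rhst rhst = sv 0 := by
  rw [courant_basis _ _ (by tauto) (by tauto)]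
  congr 1
  simp [Tbst, Wbst, omst, rhst, Te, We, ombe, rhbe, Pi.single_apply]
  try norm_num
  try ring

lemma triF_sv0 (b d : V8) (x y z : Fin 4 → ℂ) : triF (sv 0) b d x y z = 0 := by
  rw [triF_sv]; ring

lemma dL3_eq (t32 t11 t21 t12 t22 t14 : ℂ) (x y z : Fin 4 → ℂ) :
    dL3 t32 t11 t21 t12 t22 t14 x y z
      = -(I/4) * ((y 0 * x 3 - x 0 * y 3) * (t11 * z 0 + t12 * z 1 + t14 * z 3)
          - (z 0 * x 3 - x 0 * z 3) * (t11 * y 0 + t12 * y 1 + t14 * y 3)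
          + (z 0 * y 3 - y 0 * z 3) * (t11 * x 0 + t12 * x 1 + t14 * x 3)) := by
  simp [dL3, et, cL]
  ring

set_option maxHeartbeats 2000000 in
lemma key (t32 t11 t21 t12 t22 t14 : ℂ) (x y z : Fin 4 → ℂ) :
    dL3 t32 t11 t21 t12 t22 t14 x y z +
        (1/2) * (∑ k : Fin 6, ∑ l : Fin 6,
          (terms t32 t11 t21 t12 t22 t14 k).1 * (terms t32 t11 t21 t12 t22 t14 l).1 *
            schT (terms t32 t11 t21 t12 t22 t14 k).2.1 (terms t32 t11 t21 t12 t22 t14 k).2.2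
              (terms t32 t11 t21 t12 t22 t14 l).2.1 (terms t32 t11 t21 t12 t22 t14 l).2.2
              x y z)
    = I * t12 * (8 * t12 * (x 0 * (y 1 * z 2 - y 2 * z 1) - x 1 * (y 0 * z 2 - y 2 * z 0)
          + x 2 * (y 0 * z 1 - y 1 * z 0))
        - 8 * t14 * (x 0 * (y 2 * z 3 - y 3 * z 2) - x 2 * (y 0 * z 3 - y 3 * z 0)
          + x 3 * (y 0 * z 2 - y 2 * z 0))
        + (8 * t22 - 1/4) * (x 0 * (y 1 * z 3 - y 3 * z 1) - x 1 * (y 0 * z 3 - y 3 * z 0)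
          + x 3 * (y 0 * z 1 - y 1 * z 0))) := by
  rw [dL3_eq]
  simp only [Fin.sum_univ_succ, Fin.sum_univ_zero, terms,
    Matrix.cons_val_zero, Matrix.cons_val_succ, Fin.succ_zero_eq_one, Matrix.cons_val_one,
    Matrix.head_cons]
  simp only [schT,
    cr_Tb_Tb, cr_Tb_Wb, cr_Tb_om, cr_Tb_rh, cr_Wb_Tb, cr_Wb_Wb, cr_Wb_om, cr_Wb_rh,
    cr_om_Tb, cr_om_Wb, cr_om_om, cr_om_rh, cr_rh_Tb, cr_rh_Wb, cr_rh_om, cr_rh_rh,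
    triF_sv0, zero_sub, sub_zero, zero_add, add_zero, neg_zero, sub_self, mul_zero, zero_mul]
  simp only [triF_sv, phi8_Tbst, phi8_Wbst, phi8_omst, phi8_rhst]
  ring

/-- `ε̃` satisfies the generalized Maurer–Cartan equation `d_L ε̃ + (1/2)[ε̃, ε̃] = 0`
if and only if `t₁₂ = 0`. -/
theorem maurer_cartan_iff_t12_eq_zero (t32 t11 t21 t12 t22 t14 : ℂ) :
    (∀ x y z : Fin 4 → ℂ,
      dL3 t32 t11 t21 t12 t22 t14 x y z +
        (1/2) * (∑ k : Fin 6, ∑ l : Fin 6,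
          (terms t32 t11 t21 t12 t22 t14 k).1 * (terms t32 t11 t21 t12 t22 t14 l).1 *
            schT (terms t32 t11 t21 t12 t22 t14 k).2.1 (terms t32 t11 t21 t12 t22 t14 k).2.2
              (terms t32 t11 t21 t12 t22 t14 l).2.1 (terms t32 t11 t21 t12 t22 t14 l).2.2
              x y z) = 0) ↔
    t12 = 0 := by
  constructor
  · intro H
    have h := H (Pi.single 0 1) (Pi.single 1 1) (Pi.single 2 1)
    rw [key] at h
    simp [Pi.single_apply, I_ne_zero] at h
    exact h
  · rintro rfl x y z
    rw [key]
    ring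
end

section
/- The type of the deformed generalized complex structure L_ε, defined as the codimension in g ⊗ ℂ of the projection p₁(L_ε), equals 0 if t₁₄ ≠ 0 (symplectic type) and equals 2 if t₁₄ = 0 (complex type). In particular the type is never 1. -/
open Complex

noncomputable def projLeps (t11 t22 t14 : ℂ) : Submodule ℂ (Fin 4 → ℂ) :=
  Submodule.span ℂ
    {![t11, 0, 1, 0], ![0, t22, 0, 1], ![0, t14, 0, 0], ![t14, 0, 0, 0]}

lemma projLeps_top (t11 t22 t14 : ℂ) (h : t14 ≠ 0) :
    projLeps t11 t22 t14 = ⊤ := by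
  rw [eq_top_iff]
  have m1 : (![t11, 0, 1, 0] : Fin 4 → ℂ) ∈ projLeps t11 t22 t14 :=
    Submodule.subset_span (by simp)
  have m2 : (![0, t22, 0, 1] : Fin 4 → ℂ) ∈ projLeps t11 t22 t14 :=
    Submodule.subset_span (by simp)
  have m3 : (![0, t14, 0, 0] : Fin 4 → ℂ) ∈ projLeps t11 t22 t14 :=
    Submodule.subset_span (by simp)
  have m4 : (![t14, 0, 0, 0] : Fin 4 → ℂ) ∈ projLeps t11 t22 t14 :=
    Submodule.subset_span (by simp)
  have e0 : (Pi.basisFun ℂ (Fin 4)) 0 ∈ projLeps t11 t22 t14 := by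
    have := Submodule.smul_mem _ t14⁻¹ m4
    convert this using 1
    funext i
    fin_cases i <;> simp [Pi.basisFun_apply, inv_mul_cancel₀ h]
  have e1 : (Pi.basisFun ℂ (Fin 4)) 1 ∈ projLeps t11 t22 t14 := by
    have := Submodule.smul_mem _ t14⁻¹ m3
    convert this using 1
    funext i
    fin_cases i <;> simp [Pi.basisFun_apply, inv_mul_cancel₀ h]
  have e2 : (Pi.basisFun ℂ (Fin 4)) 2 ∈ projLeps t11 t22 t14 := by
    have := Submodule.sub_mem _ m1 (Submodule.smul_mem _ t11 e0)
    convert this using 1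
    funext i
    fin_cases i <;> simp [Pi.basisFun_apply]
  have e3 : (Pi.basisFun ℂ (Fin 4)) 3 ∈ projLeps t11 t22 t14 := by
    have := Submodule.sub_mem _ m2 (Submodule.smul_mem _ t22 e1)
    convert this using 1
    funext i
    fin_cases i <;> simp [Pi.basisFun_apply]
  rw [← (Pi.basisFun ℂ (Fin 4)).span_eq, Submodule.span_le]
  rintro x ⟨i, rfl⟩
  fin_cases i <;> assumption

lemma projLeps_rank (t11 t22 t14 : ℂ) (h : t14 = 0) :
    Module.finrank ℂ (projLeps t11 t22 t14) = 2 := by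
  subst h
  have hset : projLeps t11 t22 0 =
      Submodule.span ℂ (Set.range ![(![t11, 0, 1, 0] : Fin 4 → ℂ), ![0, t22, 0, 1]]) := by
    unfold projLeps
    apply le_antisymm <;> rw [Submodule.span_le]
    · intro x hx
      simp only [Set.mem_insert_iff, Set.mem_singleton_iff] at hx
      rcases hx with rfl | rfl | rfl | rfl
      · exact Submodule.subset_span ⟨0, rfl⟩
      · exact Submodule.subset_span ⟨1, rfl⟩
      · have hz : (![0, 0, 0, 0] : Fin 4 → ℂ) = 0 := by
          funext i; fin_cases i <;> rfl
        rw [hz]; exact Submodule.zero_mem _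
      · have hz : (![0, 0, 0, 0] : Fin 4 → ℂ) = 0 := by
          funext i; fin_cases i <;> rfl
        rw [hz]; exact Submodule.zero_mem _
    · rintro x ⟨i, rfl⟩
      fin_cases i
      · exact Submodule.subset_span (by simp)
      · exact Submodule.subset_span (by simp)
  rw [hset]
  have hli : LinearIndependent ℂ ![(![t11, 0, 1, 0] : Fin 4 → ℂ), ![0, t22, 0, 1]] := by
    rw [LinearIndependent.pair_iff]
    intro s t hst
    constructor
    · have := congrFun hst 2; simpa using this
    · have := congrFun hst 3; simpa using this
  rw [finrank_span_eq_card hli]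
  simp

/-- If `t₁₄ ≠ 0` the type is `0` (symplectic type); if `t₁₄ = 0` the type is `2`
(complex type); in particular the type is never `1`. -/
theorem type_of_deformation (t11 t22 t14 : ℂ) :
    (t14 ≠ 0 → 4 - Module.finrank ℂ (projLeps t11 t22 t14) = 0) ∧
    (t14 = 0 → 4 - Module.finrank ℂ (projLeps t11 t22 t14) = 2) ∧
    4 - Module.finrank ℂ (projLeps t11 t22 t14) ≠ 1 := by
  refine ⟨fun h => ?_, fun h => ?_, ?_⟩
  · rw [projLeps_top t11 t22 t14 h, finrank_top]
    simp
  · rw [projLeps_rank t11 t22 t14 h]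
  · by_cases h : t14 = 0
    · rw [projLeps_rank t11 t22 t14 h]; norm_num
    · rw [projLeps_top t11 t22 t14 h, finrank_top]; simp
end

section
/- For the Kodaira surface parameters with t₁₄ = 0, t₃₂ = 0, |t₁₁| < 1, |t₂₂| < 1, the deformed subspace L_ε = span{T̄ + t₁₁T, W̄ + t₂₂W, ω - t₁₁ω̄, ρ - t₂₂ρ̄} equals E ⊕ Ann(E) for E = span{T̄ + t₁₁T, W̄ + t₂₂W}, E ∩ Ē = 0, and E is closed under the Lie bracket of g ⊗ ℂ; hence L_ε defines a classical complex structure (the Borcea deformations). -/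
open Complex

noncomputable def evalLM (v : Fin 4 → ℂ) : (Fin 4 → ℂ) →ₗ[ℂ] ℂ :=
  ∑ i, v i • LinearMap.proj i

noncomputable def annE (E : Submodule ℂ (Fin 4 → ℂ)) : Submodule ℂ (Fin 4 → ℂ) :=
  ⨅ v ∈ E, LinearMap.ker (evalLM v)

/-- The subspace `E ⊕ Ann(E) ⊆ (g ⊕ g*) ⊗ ℂ`. -/
noncomputable def prodAnn (E : Submodule ℂ (Fin 4 → ℂ)) : Submodule ℂ V8 :=
  E.comap (LinearMap.fst ℂ (Fin 4 → ℂ) (Fin 4 → ℂ)) ⊓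
    (annE E).comap (LinearMap.snd ℂ (Fin 4 → ℂ) (Fin 4 → ℂ))

/-- `L_ε` for parameters `(0, t₁₁, t₂₂, 0)`. -/
noncomputable def Leps0 (t11 t22 : ℂ) : Submodule ℂ V8 :=
  Submodule.span ℂ
    {(![t11, 0, 1, 0], 0), (![0, t22, 0, 1], 0),
     (0, ![1, 0, -t11, 0]), (0, ![0, 1, 0, -t22])}

/-- `E = span{T̄ + t₁₁T, W̄ + t₂₂W}`. -/
noncomputable def Esub (t11 t22 : ℂ) : Submodule ℂ (Fin 4 → ℂ) :=
  Submodule.span ℂ {![t11, 0, 1, 0], ![0, t22, 0, 1]}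

/-- `Ē = span{T + t̄₁₁T̄, W + t̄₂₂W̄}`, the conjugate of `E`. -/
noncomputable def Ebar (t11 t22 : ℂ) : Submodule ℂ (Fin 4 → ℂ) :=
  Submodule.span ℂ {![1, 0, starRingEnd ℂ t11, 0], ![0, 1, 0, starRingEnd ℂ t22]}

/- In coordinates, `E = {v₀ = t₁₁ v₂, v₁ = t₂₂ v₃}` and `Ann(E) = {w₂ = -t₁₁ w₀, w₃ = -t₂₂ w₁}`,
and the latter is spanned by the two covectors of `L_ε`, so `L_ε = E × Ann(E)`. On `E ∩ Ē` one
has `v₀ = t₁₁ v₂` and `v₂ = t̄₁₁ v₀`, so `‖v₀‖ ≤ ‖t₁₁‖² ‖v₀‖` forces `v₀ = 0` when `‖t₁₁‖ < 1`;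
likewise `v₁ = 0`. The bracket only depends on `v₀ w₂ - v₂ w₀`, which vanishes on `E`,
so `E` is even abelian. -/

lemma eq_zero_of_eq_mul_of_eq_mul {𝕜 : Type*} [NormedField 𝕜] {s t x y : 𝕜}
    (ht : ‖t‖ < 1) (hs : ‖s‖ ≤ 1) (hx : x = t * y) (hy : y = s * x) : x = 0 := by
  have hnorm : ‖x‖ = ‖t‖ * ‖s‖ * ‖x‖ := by
    conv_lhs => rw [hx, hy]
    rw [norm_mul, norm_mul, mul_assoc]
  have hts : ‖t‖ * ‖s‖ < 1 :=
    mul_lt_one_of_nonneg_of_lt_one_left (norm_nonneg t) ht hs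
  have : ‖x‖ * (1 - ‖t‖ * ‖s‖) = 0 := by linear_combination hnorm
  exact norm_eq_zero.mp ((mul_eq_zero.mp this).resolve_right (by linarith))

lemma evalLM_apply (v w : Fin 4 → ℂ) :
    evalLM v w = v 0 * w 0 + v 1 * w 1 + v 2 * w 2 + v 3 * w 3 := by
  simp [evalLM, Fin.sum_univ_four]

lemma prodAnn_eq_prod (E : Submodule ℂ (Fin 4 → ℂ)) : prodAnn E = E.prod (annE E) :=
  (LinearMap.prod_eq_inf_comap _ _).symm

lemma mem_Esub {t11 t22 : ℂ} {v : Fin 4 → ℂ} :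
    v ∈ Esub t11 t22 ↔ v 0 = t11 * v 2 ∧ v 1 = t22 * v 3 := by
  rw [Esub, Submodule.mem_span_pair]
  constructor
  · rintro ⟨a, b, rfl⟩
    constructor <;> simp <;> ring
  · rintro ⟨h0, h1⟩
    refine ⟨v 2, v 3, funext fun i => ?_⟩
    fin_cases i <;> simp [h0, h1] <;> ring

lemma mem_Ebar {t11 t22 : ℂ} {v : Fin 4 → ℂ} :
    v ∈ Ebar t11 t22 ↔ v 2 = starRingEnd ℂ t11 * v 0 ∧ v 3 = starRingEnd ℂ t22 * v 1 := by
  rw [Ebar, Submodule.mem_span_pair]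
  constructor
  · rintro ⟨a, b, rfl⟩
    constructor <;> simp <;> ring
  · rintro ⟨h0, h1⟩
    refine ⟨v 0, v 1, funext fun i => ?_⟩
    fin_cases i <;> simp [h0, h1] <;> ring

lemma mem_annE_Esub {t11 t22 : ℂ} {w : Fin 4 → ℂ} :
    w ∈ annE (Esub t11 t22) ↔ w 2 = -(t11 * w 0) ∧ w 3 = -(t22 * w 1) := by
  simp only [annE, Submodule.mem_iInf, LinearMap.mem_ker, evalLM_apply]
  constructor
  · intro h
    have h1 := h ![t11, 0, 1, 0] (Submodule.subset_span (by simp))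
    have h2 := h ![0, t22, 0, 1] (Submodule.subset_span (by simp))
    simp only [Matrix.cons_val_zero, Matrix.cons_val_one, Matrix.cons_val, zero_mul, one_mul,
      add_zero, zero_add] at h1 h2
    exact ⟨by linear_combination h1, by linear_combination h2⟩
  · rintro ⟨h1, h2⟩ v hv
    obtain ⟨e0, e1⟩ := mem_Esub.mp hv
    rw [e0, e1, h1, h2]
    ring

lemma annE_Esub (t11 t22 : ℂ) :
    annE (Esub t11 t22) = Submodule.span ℂ {![1, 0, -t11, 0], ![0, 1, 0, -t22]} := by
  ext w
  rw [mem_annE_Esub, Submodule.mem_span_pair]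
  constructor
  · rintro ⟨h2, h3⟩
    refine ⟨w 0, w 1, funext fun i => ?_⟩
    fin_cases i <;> simp [h2, h3] <;> ring
  · rintro ⟨a, b, rfl⟩
    constructor <;> simp <;> ring

lemma Leps0_eq_prodAnn (t11 t22 : ℂ) : Leps0 t11 t22 = prodAnn (Esub t11 t22) := by
  rw [prodAnn_eq_prod, annE_Esub, Esub, ← LinearMap.span_inl_union_inr, Leps0]
  congr 1
  simp only [Set.image_pair, LinearMap.inl_apply, LinearMap.inr_apply, Set.insert_union,
    Set.singleton_union]

lemma Esub_inf_Ebar_eq_bot {t11 t22 : ℂ} (h11 : ‖t11‖ < 1) (h22 : ‖t22‖ < 1) :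
    Esub t11 t22 ⊓ Ebar t11 t22 = ⊥ := by
  refine eq_bot_iff.mpr fun v hv => ?_
  obtain ⟨⟨e0, e1⟩, ⟨b2, b3⟩⟩ := And.imp mem_Esub.mp mem_Ebar.mp (Submodule.mem_inf.mp hv)
  have hv0 := eq_zero_of_eq_mul_of_eq_mul h11 (by simpa using h11.le) e0 b2
  have hv1 := eq_zero_of_eq_mul_of_eq_mul h22 (by simpa using h22.le) e1 b3
  rw [Submodule.mem_bot]
  funext i
  fin_cases i <;> simp [hv0, hv1, b2, b3]

lemma gbr_eq_zero_of_mem_Esub {t11 t22 : ℂ} {v w : Fin 4 → ℂ}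
    (hv : v ∈ Esub t11 t22) (hw : w ∈ Esub t11 t22) : gbr v w = 0 := by
  funext i
  simp only [gbr, mem_Esub.mp hv, mem_Esub.mp hw, Pi.zero_apply]
  split_ifs <;> ring

/-- `L_ε = E ⊕ Ann(E)`, `E ∩ Ē = 0`, and `E` is closed under the Lie bracket:
`L_ε` defines a classical complex structure (the Borcea deformations). -/
theorem borcea_classical_complex_structure (t11 t22 : ℂ)
    (h11 : ‖t11‖ < 1) (h22 : ‖t22‖ < 1) :
    Leps0 t11 t22 = prodAnn (Esub t11 t22) ∧
    Esub t11 t22 ⊓ Ebar t11 t22 = ⊥ ∧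
    (∀ v ∈ Esub t11 t22, ∀ w ∈ Esub t11 t22, gbr v w ∈ Esub t11 t22) := by
  refine ⟨Leps0_eq_prodAnn t11 t22, Esub_inf_Ebar_eq_bot h11 h22, fun v hv w hw => ?_⟩
  rw [gbr_eq_zero_of_mem_Esub hv hw]
  exact zero_mem _
end
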